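/- For every graph G = G(n,m) with n vertices and m edges, μ₁(G) − 2m/n ≤ √(s(G)), where s(G) = Σ_{u∈V(G)} |d(u) − 2m/n| and μ₁(G) is the largest adjacency eigenvalue. -/

import Mathlib

/-!
Let `μ = μ₁(G)`, `A` the adjacency matrix and `c = 2m/n`. If `x` is a unit eigenvector for `μ`,
then `|x|` has Rayleigh quotient at least `μ` because `A ≥ 0`, hence also attains the maximum and
is a nonnegative eigenvector `y ≠ 0`. Summing `A y = μ y` gives `μ ∑ y = ∑ d(u) y(u)`, so with
`y(w)` the largest entry, `(μ - c) ∑ y = ∑ (d(u) - c) y(u) ≤ s(G) y(w)`, while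
`μ y(w) = ∑_{v ∼ w} y(v) ≤ ∑ y`. For `c ≤ μ` this yields `(μ - c) μ ≤ s(G)`, and `c ≥ 0` gives
`(μ - c)² ≤ (μ - c) μ`.
-/

open Matrix SimpleGraph

/-- The eigenvalues of the adjacency matrix of `G`, in descending order:
`graphEig G i` is the `(i+1)`-th largest eigenvalue. -/
noncomputable def graphEig {n : ℕ} (G : SimpleGraph (Fin n)) (i : Fin n) : ℝ :=
  letI := Classical.decRel G.Adj
  letI hH : (G.adjMatrix ℝ).IsHermitian := by rw [Matrix.IsHermitian, conjTranspose_eq_transpose_of_trivial]; exact G.isSymm_adjMatrix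
  hH.eigenvalues (Tuple.sort hH.eigenvalues i.rev)

open scoped ComplexOrder

theorem Tuple.apply_le_apply_sort_of_isTop {n : ℕ} {α : Type*} [LinearOrder α] (f : Fin n → α)
    {j : Fin n} (hj : IsTop j) (i : Fin n) : f i ≤ f (Tuple.sort f j) := by
  simpa using Tuple.monotone_sort f (hj ((Tuple.sort f).symm i))

namespace Matrix

variable {n : Type*} [Fintype n]

theorem dotProduct_mulVec_le_abs {A : Matrix n n ℝ} (hA : ∀ i j, 0 ≤ A i j) (x : n → ℝ) :
    x ⬝ᵥ (A *ᵥ x) ≤ |x| ⬝ᵥ (A *ᵥ |x|) := by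
  simp only [dotProduct, mulVec, Finset.mul_sum, Pi.abs_apply]
  refine Finset.sum_le_sum fun i _ => Finset.sum_le_sum fun j _ => ?_
  calc x i * (A i j * x j) ≤ |x i * (A i j * x j)| := le_abs_self _
    _ = |x i| * (A i j * |x j|) := by rw [abs_mul, abs_mul, abs_of_nonneg (hA i j)]

namespace IsHermitian

variable [DecidableEq n]

theorem posSemidef_smul_one_sub {𝕜 : Type*} [RCLike 𝕜] {A : Matrix n n 𝕜} (hA : A.IsHermitian)
    {μ : ℝ} (hμ : ∀ i, hA.eigenvalues i ≤ μ) : ((μ : 𝕜) • 1 - A).PosSemidef := by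
  set U : Matrix n n 𝕜 := (hA.eigenvectorUnitary : Matrix n n 𝕜)
  have hU : U * Uᴴ = 1 := Unitary.mul_star_self_of_mem hA.eigenvectorUnitary.2
  have hdiag : diagonal (RCLike.ofReal ∘ fun i => μ - hA.eigenvalues i) =
      (μ : 𝕜) • (1 : Matrix n n 𝕜) - diagonal (RCLike.ofReal ∘ hA.eigenvalues) := by
    rw [smul_one_eq_diagonal, diagonal_sub]
    congr 1
    ext i
    simp
  have hconj : (μ : 𝕜) • 1 - A =
      U * diagonal (RCLike.ofReal ∘ fun i => μ - hA.eigenvalues i) * Uᴴ := by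
    conv_lhs => rw [hA.spectral_theorem, Unitary.conjStarAlgAut_apply]
    rw [hdiag, mul_sub, sub_mul, mul_smul_comm, mul_one, smul_mul_assoc, hU]
    rfl
  rw [hconj]
  exact (posSemidef_diagonal_iff.mpr fun i => by simpa using hμ i).mul_mul_conjTranspose_same U

variable {A : Matrix n n ℝ} {μ : ℝ}

theorem dotProduct_mulVec_le (hA : A.IsHermitian) (hμ : ∀ i, hA.eigenvalues i ≤ μ)
    (x : n → ℝ) : x ⬝ᵥ (A *ᵥ x) ≤ μ * (x ⬝ᵥ x) := by
  have := (hA.posSemidef_smul_one_sub hμ).dotProduct_mulVec_nonneg x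
  simpa [sub_mulVec, smul_mulVec] using this

theorem mulVec_eq_smul_of_dotProduct_mulVec_eq (hA : A.IsHermitian)
    (hμ : ∀ i, hA.eigenvalues i ≤ μ) {x : n → ℝ} (hx : x ⬝ᵥ (A *ᵥ x) = μ * (x ⬝ᵥ x)) :
    A *ᵥ x = μ • x := by
  have hker := ((hA.posSemidef_smul_one_sub hμ).dotProduct_mulVec_zero_iff x).mp <| by
    simp [sub_mulVec, smul_mulVec, hx]
  simpa [sub_mulVec, smul_mulVec, sub_eq_zero, eq_comm] using hker

theorem exists_nonneg_eigenvector_of_nonneg (hA : A.IsHermitian) (hA₀ : ∀ i j, 0 ≤ A i j)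
    {j : n} (hj : ∀ i, hA.eigenvalues i ≤ hA.eigenvalues j) :
    ∃ y : n → ℝ, 0 ≤ y ∧ y ≠ 0 ∧ A *ᵥ y = hA.eigenvalues j • y := by
  set x : n → ℝ := ⇑(hA.eigenvectorBasis j)
  have hx : x ≠ 0 := fun h =>
    hA.eigenvectorBasis.orthonormal.ne_zero j (by ext i; exact congrFun h i)
  have hAx : x ⬝ᵥ (A *ᵥ x) = hA.eigenvalues j * (x ⬝ᵥ x) := by
    rw [hA.mulVec_eigenvectorBasis, dotProduct_smul, smul_eq_mul]
  have habs : |x| ⬝ᵥ |x| = x ⬝ᵥ x := by simp [dotProduct, abs_mul_abs_self]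
  refine ⟨|x|, abs_nonneg x, (Pi.abs_eq_zero x).not.mpr hx,
    hA.mulVec_eq_smul_of_dotProduct_mulVec_eq hj ?_⟩
  refine le_antisymm (hA.dotProduct_mulVec_le hj _) ?_
  rw [habs, ← hAx]
  exact dotProduct_mulVec_le_abs hA₀ x

end IsHermitian
end Matrix

namespace SimpleGraph

variable {V : Type*} (G : SimpleGraph V) [DecidableRel G.Adj]

theorem adjMatrix_nonneg (v w : V) : 0 ≤ G.adjMatrix ℝ v w := by
  rw [adjMatrix_apply]
  split_ifs <;> norm_num

variable [Fintype V]

theorem ncard_neighborSet_eq_degree (v : V) : (G.neighborSet v).ncard = G.degree v := by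
  rw [← Nat.card_coe_set_eq, Nat.card_eq_fintype_card, card_neighborSet_eq_degree]

variable {G} {y : V → ℝ} {μ : ℝ}

theorem sum_degree_mul_eq_of_adjMatrix_mulVec_eq (h : G.adjMatrix ℝ *ᵥ y = μ • y) :
    ∑ v, (G.degree v : ℝ) * y v = μ * ∑ v, y v := by
  have hcol : Function.const V (1 : ℝ) ᵥ* G.adjMatrix ℝ = fun v => (G.degree v : ℝ) := by
    ext v
    simp
  calc ∑ v, (G.degree v : ℝ) * y v = Function.const V 1 ⬝ᵥ (G.adjMatrix ℝ *ᵥ y) := by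
        rw [dotProduct_mulVec, hcol]; rfl
    _ = μ * ∑ v, y v := by simp [h, dotProduct, Finset.mul_sum, -adjMatrix_mulVec_apply]

theorem mul_apply_le_sum_of_adjMatrix_mulVec_eq (hy : 0 ≤ y) (h : G.adjMatrix ℝ *ᵥ y = μ • y)
    (w : V) : μ * y w ≤ ∑ v, y v := by
  have hw : (G.adjMatrix ℝ *ᵥ y) w = μ * y w := by rw [h, Pi.smul_apply, smul_eq_mul]
  rw [← hw, adjMatrix_mulVec_apply]
  exact Finset.sum_le_sum_of_subset_of_nonneg (Finset.subset_univ _) fun v _ _ => hy v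

theorem sub_mul_le_sum_abs_degree_sub (hy : 0 ≤ y) (hy₀ : y ≠ 0)
    (h : G.adjMatrix ℝ *ᵥ y = μ • y) {c : ℝ} (hc : c ≤ μ) :
    (μ - c) * μ ≤ ∑ u, |(G.degree u : ℝ) - c| := by
  obtain ⟨v, hv⟩ := Function.ne_iff.mp hy₀
  obtain ⟨w, -, hw⟩ := Finset.exists_max_image Finset.univ y ⟨v, Finset.mem_univ v⟩
  have hyw : 0 < y w := ((hy v).lt_of_ne (Ne.symm hv)).trans_le (hw v (Finset.mem_univ v))
  refine le_of_mul_le_mul_right ?_ hyw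
  calc (μ - c) * μ * y w = (μ - c) * (μ * y w) := mul_assoc _ _ _
    _ ≤ (μ - c) * ∑ v, y v :=
        mul_le_mul_of_nonneg_left (mul_apply_le_sum_of_adjMatrix_mulVec_eq hy h w)
          (sub_nonneg.mpr hc)
    _ = ∑ u, ((G.degree u : ℝ) - c) * y u := by
        rw [sub_mul, ← sum_degree_mul_eq_of_adjMatrix_mulVec_eq h, Finset.mul_sum,
          ← Finset.sum_sub_distrib]
        simp only [sub_mul]
    _ ≤ ∑ u, |(G.degree u : ℝ) - c| * y w := by
        refine Finset.sum_le_sum fun u _ => ?_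
        exact mul_le_mul (le_abs_self _) (hw u (Finset.mem_univ u)) (hy u) (abs_nonneg _)
    _ = (∑ u, |(G.degree u : ℝ) - c|) * y w := (Finset.sum_mul _ _ _).symm

end SimpleGraph

theorem stmt5 (n : ℕ) (hn : 0 < n) (G : SimpleGraph (Fin n)) :
    graphEig G ⟨0, hn⟩ - 2 * (G.edgeSet.ncard : ℝ) / n ≤
      Real.sqrt (∑ u : Fin n,
        |((G.neighborSet u).ncard : ℝ) - 2 * (G.edgeSet.ncard : ℝ) / n|) := by
  let _ := Classical.decRel G.Adj
  have hH : (G.adjMatrix ℝ).IsHermitian := G.isHermitian_adjMatrix ℝ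
  have htop : IsTop (Fin.rev ⟨0, hn⟩) := fun k =>
    Fin.le_iff_val_le_val.mpr (by simp only [Fin.val_rev]; omega)
  obtain ⟨y, hy, hy₀, hAy⟩ := hH.exists_nonneg_eigenvector_of_nonneg G.adjMatrix_nonneg
    (Tuple.apply_le_apply_sort_of_isTop hH.eigenvalues htop)
  set μ := graphEig G ⟨0, hn⟩
  set c : ℝ := 2 * (G.edgeSet.ncard : ℝ) / n
  simp only [G.ncard_neighborSet_eq_degree]
  rcases le_or_gt μ c with hμc | hcμ
  · exact (sub_nonpos.mpr hμc).trans (Real.sqrt_nonneg _)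
  refine Real.le_sqrt_of_sq_le ?_
  have hc : 0 ≤ c := by positivity
  calc (μ - c) ^ 2 ≤ (μ - c) * μ := by nlinarith
    _ ≤ ∑ u, |(G.degree u : ℝ) - c| := sub_mul_le_sum_abs_degree_sub hy hy₀ hAy hcμ.le
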